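/- arXiv:math/9411209 — 2 statements merged into one kernel-verified Lean document; each statement's English description precedes it below -/
import Mathlib

section
/- Let F ⊆ A. Then F is a SAGBI basis for A if and only if every nonzero a ∈ A has a SAGBI representation with respect to F, i.e., a representation a = Σ_{i=1}^N r_i·F^{e_i} with r_i ∈ R and F-power products F^{e_i} such that max_i lp(F^{e_i}) = lp(a). -/
open MvPolynomial

/-- A term order on the monomials (exponent vectors) of a polynomial ring in `n`
variables: a well-founded linear order compatible with multiplication of power
products (i.e. with addition of exponent vectors). -/
structure TermOrder (n : ℕ) where
  lo : LinearOrder (Fin n →₀ ℕ)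
  wf : WellFounded lo.lt
  add_le_add : ∀ a b c : Fin n →₀ ℕ, lo.le a b → lo.le (a + c) (b + c)

namespace TermOrder

variable {n : ℕ} {R : Type*} [CommRing R]

/-- `lp p`: the leading power product (exponent vector) of `p`; junk value `0`
for the zero polynomial. -/
noncomputable def lp (ord : TermOrder n) (p : MvPolynomial (Fin n) R) : Fin n →₀ ℕ :=
  WithBot.unbotD 0 (@Finset.max _ ord.lo p.support)

/-- `lc p`: the leading coefficient of `p` (0 if `p = 0`). -/
noncomputable def lc (ord : TermOrder n) (p : MvPolynomial (Fin n) R) : R :=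
  p.coeff (ord.lp p)

/-- `ltm p`: the leading term `lc(p)·lp(p)` of `p` (0 if `p = 0`). -/
noncomputable def ltm (ord : TermOrder n) (p : MvPolynomial (Fin n) R) : MvPolynomial (Fin n) R :=
  monomial (ord.lp p) (ord.lc p)

end TermOrder

variable {n : ℕ} {R : Type*} [CommRing R]

/-- An `F`-power product: a finite product `∏ fᵢ^{eᵢ}` with `fᵢ ∈ F`. -/
def IsPowerProduct (F : Set (MvPolynomial (Fin n) R)) (q : MvPolynomial (Fin n) R) : Prop :=
  ∃ e : MvPolynomial (Fin n) R →₀ ℕ, (e.support : Set (MvPolynomial (Fin n) R)) ⊆ F ∧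
    q = e.prod (fun f k => f ^ k)

/-- `F` is a SAGBI basis for the `R`-subalgebra `A`: `R[Lt A] = R[Lt F]`. -/
def IsSAGBI (ord : TermOrder n) (A : Subalgebra R (MvPolynomial (Fin n) R))
    (F : Set (MvPolynomial (Fin n) R)) : Prop :=
  Algebra.adjoin R (ord.ltm '' (A : Set (MvPolynomial (Fin n) R))) =
    Algebra.adjoin R (ord.ltm '' F)

/-- One step of s-reduction of `g` to `h` via `F`. -/
def SStep (ord : TermOrder n) (F : Set (MvPolynomial (Fin n) R))
    (g h : MvPolynomial (Fin n) R) : Prop :=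
  ∃ (β : Fin n →₀ ℕ) (N : ℕ) (q : Fin N → MvPolynomial (Fin n) R) (r : Fin N → R),
    g.coeff β ≠ 0 ∧
    (∀ i, IsPowerProduct F (q i) ∧ q i ≠ 0 ∧ ord.lp (q i) = β) ∧
    g.coeff β = ∑ i, r i * ord.lc (q i) ∧
    h = g - ∑ i, C (r i) * q i

/-- `g` s-reduces to `h` via `F`: a finite chain of one-step s-reductions. -/
def SReduce (ord : TermOrder n) (F : Set (MvPolynomial (Fin n) R)) :
    MvPolynomial (Fin n) R → MvPolynomial (Fin n) R → Prop :=
  Relation.ReflTransGen (SStep ord F)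

/-- One step of si-reduction of `h` to `h'` via `G`, relative to the subalgebra `A`. -/
def SiStep (ord : TermOrder n) (A : Subalgebra R (MvPolynomial (Fin n) R))
    (G : Set (MvPolynomial (Fin n) R)) (h h' : MvPolynomial (Fin n) R) : Prop :=
  ∃ (α : Fin n →₀ ℕ) (M : ℕ) (g a : Fin M → MvPolynomial (Fin n) R),
    h.coeff α ≠ 0 ∧
    (∀ i, g i ∈ G) ∧ (∀ i, a i ∈ A) ∧
    (∀ i, a i * g i ≠ 0 ∧ ord.lp (a i * g i) = α) ∧
    (monomial α (h.coeff α) : MvPolynomial (Fin n) R) = ∑ i, ord.ltm (a i * g i) ∧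
    h' = h - ∑ i, a i * g i

/-- `h` si-reduces to `h'` via `G`: a finite chain of one-step si-reductions. -/
def SiReduce (ord : TermOrder n) (A : Subalgebra R (MvPolynomial (Fin n) R))
    (G : Set (MvPolynomial (Fin n) R)) :
    MvPolynomial (Fin n) R → MvPolynomial (Fin n) R → Prop :=
  Relation.ReflTransGen (SiStep ord A G)

/-- The subalgebra `R[Lt A]` generated by the leading terms of elements of `A`. -/
noncomputable def LtAlg (ord : TermOrder n) (A : Subalgebra R (MvPolynomial (Fin n) R)) :
    Subalgebra R (MvPolynomial (Fin n) R) :=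
  Algebra.adjoin R (ord.ltm '' (A : Set (MvPolynomial (Fin n) R)))

/-- The leading term of an element of `A`, as an element of `R[Lt A]`. -/
noncomputable def ltA (ord : TermOrder n) (A : Subalgebra R (MvPolynomial (Fin n) R))
    (a : A) : LtAlg ord A :=
  ⟨ord.ltm (a : MvPolynomial (Fin n) R), Algebra.subset_adjoin ⟨a, a.2, rfl⟩⟩

/-- `G ⊆ I` is a SAGBI–Gröbner basis (SG-basis) for the ideal `I` of `A`:
`Lt G` generates the ideal `⟨Lt I⟩` in the subalgebra `R[Lt A]`. -/
def IsSGBasis (ord : TermOrder n) (A : Subalgebra R (MvPolynomial (Fin n) R))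
    (I : Ideal A) (G : Set A) : Prop :=
  Ideal.span
      ((Subtype.val ⁻¹' (ord.ltm '' (Subtype.val '' G)) : Set (LtAlg ord A))) =
  Ideal.span
      ((Subtype.val ⁻¹' (ord.ltm '' (Subtype.val '' (I : Set A))) : Set (LtAlg ord A)))

/-!
A term order is a monomial order in Mathlib's sense (well-foundedness forces every exponent to
be `≥ 0`), so `lp` and `ltm` are `MonomialOrder.degree` and `MonomialOrder.leadingTerm`, and over
a domain the leading term is multiplicative. Hence `R[Lt F]` is the `R`-span of the leading terms
of `F`-power products. If `lt a` lies in that span, keeping only the `lp a`-terms produces a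
combination `b` of power products of degree `≤ lp a` with `lt b = lt a`; then `a - b ∈ A` has
smaller degree and well-founded induction on the degree gives the representation. Conversely,
the `lp a`-term of a representation of `a` exhibits `lt a` as an element of `R[Lt F]`.
-/

namespace MvPolynomial

variable {σ : Type*}

noncomputable def termAt (α : σ →₀ ℕ) : MvPolynomial σ R →ₗ[R] MvPolynomial σ R :=
  (monomial α).comp (lcoeff R α)

theorem termAt_apply (α : σ →₀ ℕ) (p : MvPolynomial σ R) :
    termAt α p = monomial α (p.coeff α) := rfl

end MvPolynomial

namespace MonomialOrder

open MvPolynomial Submodule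
open scoped MonomialOrder

variable {σ : Type*} (m : MonomialOrder σ)

theorem termAt_degree (p : MvPolynomial σ R) : termAt (m.degree p) p = m.leadingTerm p := rfl

theorem termAt_leadingTerm_degree (p : MvPolynomial σ R) :
    termAt (m.degree p) (m.leadingTerm p) = m.leadingTerm p := by
  classical
  simp [termAt_apply, leadingTerm]

theorem termAt_leadingTerm_of_ne {α : σ →₀ ℕ} {q : MvPolynomial σ R}
    (h : m.degree q ≠ α) :
    termAt α (m.leadingTerm q) = 0 := by
  classical
  simp [termAt_apply, leadingTerm, h]

theorem termAt_of_degree_lt {α : σ →₀ ℕ} {q : MvPolynomial σ R}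
    (h : m.degree q ≺[m] α) :
    termAt α q = 0 := by
  rw [termAt_apply, m.coeff_eq_zero_of_lt h, map_zero]

theorem degree_le_of_mem_span {T : Set (MvPolynomial σ R)} {α : σ →₀ ℕ}
    (hT : ∀ q ∈ T, m.degree q ≼[m] α) {p : MvPolynomial σ R} (hp : p ∈ span R T) :
    m.degree p ≼[m] α := by
  induction hp using Submodule.span_induction with
  | mem q hq => exact hT q hq
  | zero => simp
  | add p q _ _ hp hq => exact m.degree_add_le.trans (sup_le hp hq)
  | smul r p _ hp => exact m.degree_smul_le.trans hp

theorem degree_sub_lt_of_leadingTerm_eq {a b : MvPolynomial σ R}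
    (h : m.leadingTerm a = m.leadingTerm b) (hab : a ≠ b) :
    m.degree (a - b) ≺[m] m.degree a := by
  obtain ⟨hlc, hdeg⟩ := m.leadingTerm_eq_leadingTerm_iff.1 h
  refine lt_of_le_of_ne (m.degree_sub_le.trans (by rw [hdeg, sup_idem])) fun heq => ?_
  have hcoeff : (a - b).coeff (m.degree (a - b)) = 0 := by
    rw [m.toSyn.injective heq, coeff_sub]
    exact sub_eq_zero.2 (hlc.trans (by rw [leadingCoeff, hdeg]))
  exact sub_ne_zero.2 hab (m.coeff_degree_eq_zero_iff.1 hcoeff)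

theorem leadingTerm_mem_span_of_mem_span {T : Set (MvPolynomial σ R)} {a : MvPolynomial σ R}
    (ha : a ∈ span R {q | q ∈ T ∧ m.degree q ≼[m] m.degree a}) :
    m.leadingTerm a ∈ span R (m.leadingTerm '' T) := by
  rw [← termAt_degree]
  refine (span_le (p := (span R (m.leadingTerm '' T)).comap (termAt (m.degree a)))).2 ?_ ha
  rintro q ⟨hqT, hq⟩
  rw [SetLike.mem_coe, mem_comap]
  rcases hq.lt_or_eq with hlt | heq
  · rw [m.termAt_of_degree_lt hlt]
    exact zero_mem _
  · rw [← m.toSyn.injective heq, termAt_degree]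
    exact subset_span ⟨q, hqT, rfl⟩

theorem exists_mem_span_leadingTerm_eq {T : Set (MvPolynomial σ R)} {a : MvPolynomial σ R}
    (ha : a ≠ 0) (h : m.leadingTerm a ∈ span R (m.leadingTerm '' T)) :
    ∃ b ∈ span R {q | q ∈ T ∧ m.degree q ≼[m] m.degree a},
      m.leadingTerm b = m.leadingTerm a := by
  set Tα := {q | q ∈ T ∧ m.degree q ≼[m] m.degree a}
  have hmap : m.leadingTerm a ∈ (span R Tα).map (termAt (m.degree a)) := by
    rw [map_span, ← m.termAt_leadingTerm_degree a]
    refine (span_le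
      (p := (span R (termAt (m.degree a) '' Tα)).comap (termAt (m.degree a)))).2 ?_ h
    rintro _ ⟨q, hqT, rfl⟩
    rw [SetLike.mem_coe, mem_comap]
    by_cases hq : m.degree q = m.degree a
    · refine subset_span ⟨q, ⟨hqT, hq ▸ le_rfl⟩, ?_⟩
      rw [← hq, termAt_degree, termAt_leadingTerm_degree]
    · rw [m.termAt_leadingTerm_of_ne hq]
      exact zero_mem _
  obtain ⟨b, hb, hba⟩ := hmap
  have hcoeff : b.coeff (m.degree a) = a.coeff (m.degree a) := by
    classical
    simpa [termAt_apply] using congr(coeff (m.degree a) $(hba.trans (m.termAt_degree a).symm))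
  have hdeg : m.degree b = m.degree a := by
    refine m.toSyn.injective (le_antisymm (m.degree_le_of_mem_span (fun q hq => hq.2) hb) ?_)
    refine m.le_degree (mem_support_iff.2 ?_)
    rw [hcoeff]
    exact m.leadingCoeff_ne_zero_iff.2 ha
  refine ⟨b, hb, ?_⟩
  rw [leadingTerm, leadingCoeff, hdeg, hcoeff]
  rfl

theorem mem_span_of_leadingTerm_mem_span {A : Submodule R (MvPolynomial σ R)}
    {T : Set (MvPolynomial σ R)} (hTA : T ⊆ A)
    (hlt : ∀ a ∈ A, m.leadingTerm a ∈ span R (m.leadingTerm '' T))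
    {a : MvPolynomial σ R} (ha : a ∈ A) :
    a ∈ span R {q | q ∈ T ∧ m.degree q ≼[m] m.degree a} := by
  obtain ⟨α, hα⟩ : ∃ α, m.toSyn (m.degree a) = α := ⟨_, rfl⟩
  induction α using WellFoundedLT.induction generalizing a with
  | ind α ih =>
  rcases eq_or_ne a 0 with rfl | ha0
  · exact zero_mem _
  obtain ⟨b, hb, hba⟩ := m.exists_mem_span_leadingTerm_eq ha0 (hlt a ha)
  rcases eq_or_ne a b with rfl | hab
  · exact hb
  have hsub := m.degree_sub_lt_of_leadingTerm_eq hba.symm hab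
  have hbA : b ∈ A := span_le.2 (fun q hq => hTA hq.1) hb
  have hrem := ih _ (hα ▸ hsub) (A.sub_mem ha hbA) rfl
  have hmono : {q | q ∈ T ∧ m.degree q ≼[m] m.degree (a - b)} ⊆
      {q | q ∈ T ∧ m.degree q ≼[m] m.degree a} := fun q hq => ⟨hq.1, hq.2.trans hsub.le⟩
  simpa using add_mem (span_mono hmono hrem) hb

noncomputable def leadingTermHom [NoZeroDivisors R] : MvPolynomial σ R →* MvPolynomial σ R where
  toFun := m.leadingTerm
  map_one' := by simpa using m.leadingTerm_C (1 : R)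
  map_mul' := m.leadingTerm_mul

theorem mem_adjoin_leadingTerm_iff [NoZeroDivisors R] (F : Set (MvPolynomial σ R))
    (p : MvPolynomial σ R) :
    p ∈ Algebra.adjoin R (m.leadingTerm '' F) ↔
      p ∈ span R (m.leadingTerm '' (Submonoid.closure F : Set (MvPolynomial σ R))) := by
  rw [← Subalgebra.mem_toSubmodule, Algebra.adjoin_eq_span]
  change p ∈ span R (Submonoid.closure (m.leadingTermHom '' F)) ↔ _
  rw [← MonoidHom.map_mclosure, Submonoid.coe_map]
  rfl

theorem adjoin_leadingTerm_eq_iff [NoZeroDivisors R] {A : Subalgebra R (MvPolynomial σ R)}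
    {F : Set (MvPolynomial σ R)} (hFA : F ⊆ A) :
    Algebra.adjoin R (m.leadingTerm '' A) = Algebra.adjoin R (m.leadingTerm '' F) ↔
      ∀ a ∈ A,
        a ∈ span R {q | q ∈ Submonoid.closure F ∧ m.degree q ≼[m] m.degree a} := by
  constructor
  · intro h a ha
    refine m.mem_span_of_leadingTerm_mem_span (A := Subalgebra.toSubmodule A)
      (Submonoid.closure_le (S := A.toSubmonoid).2 hFA) (fun a ha => ?_) ha
    rw [← mem_adjoin_leadingTerm_iff, ← h]
    exact Algebra.subset_adjoin ⟨a, ha, rfl⟩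
  · intro h
    refine le_antisymm (Algebra.adjoin_le ?_) (Algebra.adjoin_mono (Set.image_mono hFA))
    rintro _ ⟨a, ha, rfl⟩
    exact (m.mem_adjoin_leadingTerm_iff F _).2 (m.leadingTerm_mem_span_of_mem_span (h a ha))

theorem mem_span_iff_exists_sum {S : Set (MvPolynomial σ R)} {a : MvPolynomial σ R}
    (ha : a ≠ 0) :
    a ∈ span R {q | q ∈ S ∧ m.degree q ≼[m] m.degree a} ↔
      ∃ (N : ℕ) (r : Fin N → R) (q : Fin N → MvPolynomial σ R),
        (∀ i, q i ∈ S) ∧ a = ∑ i, C (r i) * q i ∧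
        (∀ i, m.degree (q i) ≼[m] m.degree a) ∧ ∃ i, m.degree (q i) = m.degree a := by
  constructor
  · rw [mem_span_set']
    rintro ⟨N, r, q, hsum⟩
    refine ⟨N, r, fun i => q i, fun i => (q i).2.1, ?_, fun i => (q i).2.2, ?_⟩
    · simp only [← hsum, C_mul']
    · by_contra! hne
      have hlt (i : Fin N) : m.degree (q i : MvPolynomial σ R) ≺[m] m.degree a :=
        lt_of_le_of_ne (q i).2.2 (m.toSyn.injective.ne (hne i))
      refine ha (m.coeff_degree_eq_zero_iff.1 ?_)
      rw [← congr(coeff (m.degree a) $hsum), coeff_sum]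
      exact Finset.sum_eq_zero fun i _ => by
        rw [coeff_smul, m.coeff_eq_zero_of_lt (hlt i), smul_zero]
  · rintro ⟨N, r, q, hqS, hsum, hle, -⟩
    have hmem : ∑ i, C (r i) * q i ∈ span R {q | q ∈ S ∧ m.degree q ≼[m] m.degree a} :=
      sum_mem fun i _ => by
        rw [C_mul']
        exact smul_mem _ _ (subset_span ⟨hqS i, hle i⟩)
    rwa [← hsum] at hmem

end MonomialOrder

namespace TermOrder

open scoped MonomialOrder

variable {n : ℕ} (ord : TermOrder n)

/-- A type synonym carrying `ord.lo`, which would otherwise clash with the pointwise order on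
`Fin n →₀ ℕ`. -/
def Exponent (_ord : TermOrder n) : Type := Fin n →₀ ℕ

noncomputable instance : AddCommMonoid ord.Exponent :=
  inferInstanceAs (AddCommMonoid (Fin n →₀ ℕ))

instance : IsCancelAdd ord.Exponent := inferInstanceAs (IsCancelAdd (Fin n →₀ ℕ))

instance : LinearOrder ord.Exponent := ord.lo

instance : IsOrderedAddMonoid ord.Exponent where
  add_le_add_left a b h c := ord.add_le_add a b c h

instance : WellFoundedLT ord.Exponent := ⟨ord.wf⟩

theorem zero_le (c : ord.Exponent) : 0 ≤ c := by
  by_contra! hc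
  exact not_strictAnti_of_wellFoundedLT (fun k : ℕ => k • c)
    (strictAnti_nat_of_succ_lt fun k => by simpa [succ_nsmul] using add_lt_add_right hc (k • c))

noncomputable def toMonomialOrder : MonomialOrder (Fin n) where
  syn := ord.Exponent
  toSyn := { Equiv.refl _ with map_add' := fun _ _ => rfl }
  toSyn_monotone a b hab := by
    obtain ⟨c, rfl⟩ := exists_add_of_le hab
    have h := add_le_add_right (ord.zero_le c) (show ord.Exponent from a)
    rwa [add_zero] at h

theorem le_iff_toSyn_le {a b : Fin n →₀ ℕ} :
    ord.lo.le a b ↔ a ≼[ord.toMonomialOrder] b := Iff.rfl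

theorem lp_eq_degree (p : MvPolynomial (Fin n) R) : ord.lp p = ord.toMonomialOrder.degree p := by
  let := ord.lo
  rcases eq_or_ne p 0 with rfl | hp
  · simp [lp]
  have hne := MvPolynomial.support_nonempty.2 hp
  rw [lp, ← Finset.coe_max' hne, WithBot.unbotD_coe]
  exact ord.lo.le_antisymm _ _
    (Finset.max'_le _ _ _ fun β hβ => ord.toMonomialOrder.le_degree hβ)
    ((ord.toMonomialOrder.degree_le_iff (f := p)).2 fun β hβ => Finset.le_max' _ _ hβ)

theorem ltm_eq_leadingTerm : ord.ltm = ord.toMonomialOrder.leadingTerm (R := R) := by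
  ext1 p
  rw [ltm, lc, MonomialOrder.leadingTerm, MonomialOrder.leadingCoeff, lp_eq_degree]

end TermOrder

theorem isPowerProduct_iff_mem_closure {F : Set (MvPolynomial (Fin n) R)}
    {q : MvPolynomial (Fin n) R} :
    IsPowerProduct F q ↔ q ∈ Submonoid.closure F := by
  classical
  constructor
  · rintro ⟨e, he, rfl⟩
    exact prod_mem fun f hf => pow_mem (Submonoid.subset_closure (he hf)) _
  · intro hq
    rw [← Subtype.range_coe (s := F)] at hq
    obtain ⟨e, rfl⟩ := Submonoid.exists_finsupp_of_mem_closure_range _ _ hq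
    refine ⟨e.mapDomain Subtype.val, fun f hf => ?_, ?_⟩
    · obtain ⟨f, -, rfl⟩ := Finset.mem_image.1 (Finsupp.mapDomain_support hf)
      exact f.2
    · rw [Finsupp.prod_mapDomain_index (fun _ => pow_zero _) (fun _ _ _ => pow_add _ _ _)]

theorem isSAGBI_iff_sagbi_representation_general {n : ℕ} {R : Type*} [CommRing R]
    [IsDomain R] (ord : TermOrder n)
    (A : Subalgebra R (MvPolynomial (Fin n) R)) (F : Set (MvPolynomial (Fin n) R))
    (hFA : F ⊆ (A : Set (MvPolynomial (Fin n) R))) :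
    IsSAGBI ord A F ↔
      ∀ a ∈ A, a ≠ 0 →
        ∃ (N : ℕ) (r : Fin N → R) (q : Fin N → MvPolynomial (Fin n) R),
          (∀ i, IsPowerProduct F (q i)) ∧
          a = ∑ i, MvPolynomial.C (r i) * q i ∧
          (∀ i, ord.lo.le (ord.lp (q i)) (ord.lp a)) ∧
          (∃ i, ord.lp (q i) = ord.lp a) := by
  rw [IsSAGBI, ord.ltm_eq_leadingTerm, ord.toMonomialOrder.adjoin_leadingTerm_eq_iff hFA]
  simp only [isPowerProduct_iff_mem_closure, ord.lp_eq_degree, ord.le_iff_toSyn_le]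
  refine forall₂_congr fun a _ =>
    ⟨fun h ha => (ord.toMonomialOrder.mem_span_iff_exists_sum ha).1 h, fun h => ?_⟩
  rcases eq_or_ne a 0 with rfl | ha
  · exact zero_mem _
  · exact (ord.toMonomialOrder.mem_span_iff_exists_sum ha).2 (h ha)

/-- `F ⊆ A` is a SAGBI basis for `A` iff every nonzero `a ∈ A` has
a SAGBI representation `a = ∑ rᵢ • F^{eᵢ}` with `maxᵢ lp(F^{eᵢ}) = lp(a)`. -/
theorem isSAGBI_iff_sagbi_representation {n : ℕ} {R : Type*} [CommRing R]
    [IsDomain R] [IsNoetherianRing R] (ord : TermOrder n)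
    (A : Subalgebra R (MvPolynomial (Fin n) R)) (F : Set (MvPolynomial (Fin n) R))
    (hFA : F ⊆ (A : Set (MvPolynomial (Fin n) R))) :
    IsSAGBI ord A F ↔
      ∀ a ∈ A, a ≠ 0 →
        ∃ (N : ℕ) (r : Fin N → R) (q : Fin N → MvPolynomial (Fin n) R),
          (∀ i, IsPowerProduct F (q i)) ∧
          a = ∑ i, MvPolynomial.C (r i) * q i ∧
          (∀ i, ord.lo.le (ord.lp (q i)) (ord.lp a)) ∧
          (∃ i, ord.lp (q i) = ord.lp a) :=
  isSAGBI_iff_sagbi_representation_general ord A F hFA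
end

section
/- Let G ⊆ A. Every chain of one-step si-reductions via G must terminate; that is, there is no infinite sequence h_0, h_1, h_2, … in A such that h_j si-reduces to h_{j+1} via G in one step for every j. Consequently every h ∈ A has a final si-reductum via G (an element obtained from h by a finite chain of one-step si-reductions that cannot be further si-reduced via G). -/
/-!
A one-step si-reduction at the power product `α` subtracts `∑ aᵢ gᵢ` with every `lp (aᵢ gᵢ) = α`
and with leading terms summing to the term of `h` at `α`: the term at `α` is cancelled and all
terms above `α` are untouched. Reading a polynomial as its coefficient function, this is a
descent in the lexicographic order that compares coefficients from the top power product
downwards, with "nonzero → zero" at the first difference. Since the term order is a well-order,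
that order is well-founded (`Finsupp.Lex.wellFounded`), so there are no infinite si-reduction
chains, and well-founded induction yields an irreducible si-reductum of every `h`.
-/

open MvPolynomial

variable {n : ℕ} {R : Type*} [CommRing R]

namespace TermOrder

variable (ord : TermOrder n)

theorem le_lp_of_mem_support {p : MvPolynomial (Fin n) R} {β : Fin n →₀ ℕ}
    (hβ : β ∈ p.support) : ord.lo.le β (ord.lp p) := by
  let := ord.lo
  obtain ⟨m, hm⟩ := Finset.max_of_mem hβ
  have hlp : ord.lp p = m := by simp [lp, hm]
  exact hlp ▸ Finset.le_max_of_eq hβ hm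

theorem coeff_eq_zero_of_lp_lt {p : MvPolynomial (Fin n) R} {β : Fin n →₀ ℕ}
    (h : ord.lo.lt (ord.lp p) β) : p.coeff β = 0 := by
  by_contra hβ
  exact ((ord.lo.lt_iff_le_not_ge _ _).1 h).2 (ord.le_lp_of_mem_support (mem_support_iff.mpr hβ))

theorem coeff_lp_ltm (p : MvPolynomial (Fin n) R) :
    (ord.ltm p).coeff (ord.lp p) = p.coeff (ord.lp p) := by
  simp [ltm, lc, coeff_monomial]

def CancelsTermOf (q p : MvPolynomial (Fin n) R) : Prop :=
  ∃ α, p.coeff α ≠ 0 ∧ q.coeff α = 0 ∧ ∀ β, ord.lo.lt α β → q.coeff β = p.coeff β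

theorem wellFounded_cancelsTermOf : WellFounded (ord.CancelsTermOf (R := R)) := by
  have hgt : WellFounded ((Function.swap ord.lo.lt)ᶜ ⊓ (· ≠ ·)) :=
    Subrelation.wf (fun ⟨hba, hab⟩ => (@lt_or_gt_of_ne _ ord.lo _ _ hab).resolve_right hba) ord.wf
  have hzero : WellFounded fun a b : R => a = 0 ∧ b ≠ 0 :=
    ⟨fun b => ⟨b, fun a ha => ⟨a, fun _ hc => (hc.2 ha.1).elim⟩⟩⟩
  have hlex : WellFounded (Finsupp.Lex (Function.swap ord.lo.lt) fun a b : R => a = 0 ∧ b ≠ 0) :=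
    Finsupp.Lex.wellFounded (fun _ h => h.2 rfl) hzero hgt
  -- `AddMonoidAlgebra.coeff p` is `p` seen as its coefficient function `(Fin n →₀ ℕ) →₀ R`
  refine Subrelation.wf ?_ (InvImage.wf AddMonoidAlgebra.coeff hlex)
  rintro q p ⟨α, hp, hq, hhigh⟩
  exact ⟨α, hhigh, hq, hp⟩

theorem cancelsTermOf_sub_sum {ι : Type*} (s : Finset ι) {h : MvPolynomial (Fin n) R}
    {q : ι → MvPolynomial (Fin n) R} {α : Fin n →₀ ℕ} (hα : h.coeff α ≠ 0)
    (hlp : ∀ i ∈ s, ord.lp (q i) = α)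
    (hlt : monomial α (h.coeff α) = ∑ i ∈ s, ord.ltm (q i)) :
    ord.CancelsTermOf (h - ∑ i ∈ s, q i) h := by
  refine ⟨α, hα, ?_, fun β hβ => ?_⟩
  · have hsum : ∑ i ∈ s, (q i).coeff α = h.coeff α :=
      calc ∑ i ∈ s, (q i).coeff α = ∑ i ∈ s, (ord.ltm (q i)).coeff α :=
            Finset.sum_congr rfl fun i hi => by rw [← hlp i hi, coeff_lp_ltm]
        _ = h.coeff α := by rw [← coeff_sum, ← hlt, coeff_monomial, if_pos rfl]
    rw [coeff_sub, coeff_sum, hsum, sub_self]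
  · have hzero : ∀ i ∈ s, (q i).coeff β = 0 := fun i hi =>
      ord.coeff_eq_zero_of_lp_lt ((hlp i hi).symm ▸ hβ)
    rw [coeff_sub, coeff_sum, Finset.sum_eq_zero hzero, sub_zero]

end TermOrder

theorem SiStep.cancelsTermOf {ord : TermOrder n} {A : Subalgebra R (MvPolynomial (Fin n) R)}
    {G : Set (MvPolynomial (Fin n) R)} {h h' : MvPolynomial (Fin n) R}
    (hs : SiStep ord A G h h') : ord.CancelsTermOf h' h := by
  obtain ⟨α, M, g, a, hα, -, -, hlp, hlt, rfl⟩ := hs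
  exact ord.cancelsTermOf_sub_sum Finset.univ hα (fun i _ => (hlp i).2) hlt

namespace WellFounded

variable {α : Type*} {r : α → α → Prop}

theorem not_exists_rel_apply_succ (hr : WellFounded (flip r)) :
    ¬ ∃ f : ℕ → α, ∀ j, r (f j) (f (j + 1)) :=
  fun ⟨f, hf⟩ => (wellFounded_iff_isEmpty_descending_chain.1 hr).elim ⟨f, hf⟩

theorem exists_reflTransGen_forall_not_rel (hr : WellFounded (flip r)) (a : α) :
    ∃ b, Relation.ReflTransGen r a b ∧ ∀ c, ¬ r b c := by
  induction a using hr.induction with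
  | _ a ih =>
    by_cases hstep : ∃ b, r a b
    · obtain ⟨b, hab⟩ := hstep
      obtain ⟨c, hbc, hc⟩ := ih b hab
      exact ⟨c, .head hab hbc, hc⟩
    · exact ⟨a, .refl, fun c hac => hstep ⟨c, hac⟩⟩

end WellFounded

theorem sireduce_terminates_general {n : ℕ} {R : Type*} [CommRing R] (ord : TermOrder n)
    (A : Subalgebra R (MvPolynomial (Fin n) R)) (G : Set (MvPolynomial (Fin n) R)) :
    (¬ ∃ seq : ℕ → MvPolynomial (Fin n) R, (∀ j, seq j ∈ A) ∧
      ∀ j, SiStep ord A G (seq j) (seq (j + 1))) ∧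
    (∀ h ∈ A, ∃ h' : MvPolynomial (Fin n) R, SiReduce ord A G h h' ∧
      ∀ h'' : MvPolynomial (Fin n) R, ¬ SiStep ord A G h' h'') := by
  have hwf : WellFounded (flip (SiStep ord A G)) :=
    Subrelation.wf SiStep.cancelsTermOf ord.wellFounded_cancelsTermOf
  exact ⟨fun ⟨seq, _, hseq⟩ => hwf.not_exists_rel_apply_succ ⟨seq, hseq⟩,
    fun h _ => hwf.exists_reflTransGen_forall_not_rel h⟩

/-- every chain of one-step si-reductions via `G` (within `A`)
terminates, and consequently every `h ∈ A` has a final si-reductum via `G`. -/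
theorem sireduce_terminates {n : ℕ} {R : Type*} [CommRing R] [IsDomain R]
    [IsNoetherianRing R] (ord : TermOrder n)
    (A : Subalgebra R (MvPolynomial (Fin n) R)) (G : Set (MvPolynomial (Fin n) R))
    (hGA : G ⊆ (A : Set (MvPolynomial (Fin n) R))) :
    (¬ ∃ seq : ℕ → MvPolynomial (Fin n) R, (∀ j, seq j ∈ A) ∧
      ∀ j, SiStep ord A G (seq j) (seq (j + 1))) ∧
    (∀ h ∈ A, ∃ h' : MvPolynomial (Fin n) R, SiReduce ord A G h h' ∧
      ∀ h'' : MvPolynomial (Fin n) R, ¬ SiStep ord A G h' h'') :=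
  sireduce_terminates_general ord A G
end
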